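/- Let X* be the dual of a Banach space and r_{X*} its Opial modulus with respect to weak*-null sequences. If (x_n*) ⊆ X* with ‖x_n*‖ = 1 for all n, x_n* ⇀* x*, x* ≠ 0, and 0 < liminf_n ‖x_n* − x*‖ < ‖x*‖, then liminf_n ‖x_n* − x*‖ ≤ 1/(1 + r_{X*}(1)). -/

import Mathlib

open Filter Topology

variable {X : Type*} [NormedAddCommGroup X] [NormedSpace ℝ X]

/-- `x` is a weakly null sequence in `X`. -/
def WeakNull {X : Type*} [NormedAddCommGroup X] [NormedSpace ℝ X] (x : ℕ → X) : Prop :=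
  ∀ f : X →L[ℝ] ℝ, Tendsto (fun n => f (x n)) atTop (nhds 0)

/-- `f` converges to `g` in the weak* topology of the dual. -/
def WeakStarTendsto {X : Type*} [NormedAddCommGroup X] [NormedSpace ℝ X]
    (f : ℕ → X →L[ℝ] ℝ) (g : X →L[ℝ] ℝ) : Prop :=
  ∀ v : X, Tendsto (fun n => f n v) atTop (nhds (g v))

/-- `f` is a weak*-null sequence in the dual. -/
def WeakStarNull {X : Type*} [NormedAddCommGroup X] [NormedSpace ℝ X]
    (f : ℕ → X →L[ℝ] ℝ) : Prop :=
  WeakStarTendsto f 0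

/-- The coefficient `R(X)`. -/
noncomputable def RCoef (X : Type*) [NormedAddCommGroup X] [NormedSpace ℝ X] : ℝ :=
  sSup { r | ∃ (x : ℕ → X) (y : X), (∀ n, ‖x n‖ ≤ 1) ∧ WeakNull x ∧ ‖y‖ ≤ 1 ∧
    r = Filter.liminf (fun n => ‖x n + y‖) atTop }

/-- Opial's modulus of `X`. -/
noncomputable def opialModulus (X : Type*) [NormedAddCommGroup X] [NormedSpace ℝ X] (c : ℝ) : ℝ :=
  sInf { r | ∃ (x : ℕ → X) (y : X), c ≤ ‖y‖ ∧ WeakNull x ∧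
    1 ≤ Filter.liminf (fun n => ‖x n‖) atTop ∧
    r = Filter.liminf (fun n => ‖x n - y‖) atTop - 1 }

/-- Opial's modulus of the dual `X*`, with respect to weak*-null sequences. -/
noncomputable def opialModulusStar (X : Type*) [NormedAddCommGroup X] [NormedSpace ℝ X] (c : ℝ) : ℝ :=
  sInf { r | ∃ (f : ℕ → X →L[ℝ] ℝ) (g : X →L[ℝ] ℝ), c ≤ ‖g‖ ∧ WeakStarNull f ∧
    1 ≤ Filter.liminf (fun n => ‖f n‖) atTop ∧
    r = Filter.liminf (fun n => ‖f n - g‖) atTop - 1 }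

/-- Property(K) for `X`. -/
def PropertyK (X : Type*) [NormedAddCommGroup X] [NormedSpace ℝ X] : Prop :=
  ∃ K, 0 ≤ K ∧ K < 1 ∧ ∀ (x : ℕ → X) (y : X),
    WeakNull x → Tendsto (fun n => ‖x n‖) atTop (nhds 1) →
    Filter.liminf (fun n => ‖x n - y‖) atTop ≤ 1 → ‖y‖ ≤ K

/-- Property(K*) for the dual `X*`. -/
def PropertyKStar (X : Type*) [NormedAddCommGroup X] [NormedSpace ℝ X] : Prop :=
  ∃ K, 0 ≤ K ∧ K < 1 ∧ ∀ (f : ℕ → X →L[ℝ] ℝ) (g : X →L[ℝ] ℝ),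
    (∀ n, ‖f n‖ ≤ 1) → WeakStarNull f →
    Tendsto (fun n => ‖f n‖) atTop (nhds 1) →
    Filter.liminf (fun n => ‖f n - g‖) atTop ≤ 1 → ‖g‖ ≤ K

/-! Write `d` for the liminf. The rescaled functionals `(f n - g) / d` are weak*-null with
liminf of norms `1`, the functional `-g / d` has norm `‖g‖ / d > 1`, and their differences
`f n / d` all have norm `1 / d`; hence `r(1) ≤ 1 / d - 1`. Weak* lower semicontinuity of the
dual norm gives `r(1) ≥ 0`, so `1 + r(1)` is positive and the bound can be inverted. -/

namespace Real

variable {ι : Type*} {l : Filter ι} [l.NeBot] {u : ι → ℝ}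

theorem liminf_const_mul {c : ℝ} (hc : 0 < c) (hbdd_ge : IsBoundedUnder (· ≥ ·) l u)
    (hbdd_le : IsBoundedUnder (· ≤ ·) l u) :
    liminf (fun i => c * u i) l = c * liminf u l := by
  let e := OrderIso.mulLeft₀ c hc
  have he_le : IsBoundedUnder (· ≤ ·) l fun i => e (u i) := e.isBoundedUnder_le_comp.2 hbdd_le
  exact (e.liminf_apply hbdd_ge hbdd_le.isCoboundedUnder_ge
    (e.isBoundedUnder_ge_comp.2 hbdd_ge) he_le.isCoboundedUnder_ge).symm

end Real

section WeakStar

variable {f : ℕ → X →L[ℝ] ℝ} {g : X →L[ℝ] ℝ}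

theorem WeakStarTendsto.sub_const (h : WeakStarTendsto f g) (k : X →L[ℝ] ℝ) :
    WeakStarTendsto (fun n => f n - k) (g - k) :=
  fun v => (h v).sub_const (k v)

theorem WeakStarTendsto.const_smul (h : WeakStarTendsto f g) (c : ℝ) :
    WeakStarTendsto (fun n => c • f n) (c • g) :=
  fun v => (h v).const_mul c

theorem WeakStarTendsto.eventually_lt_norm (h : WeakStarTendsto f g) {c : ℝ} (hc : c < ‖g‖) :
    ∀ᶠ n in atTop, c < ‖f n‖ := by
  obtain ⟨v, hv, hcv⟩ := g.exists_lt_apply_of_lt_opNorm hc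
  filter_upwards [(h v).norm.eventually (lt_mem_nhds hcv)] with n hn
  calc c < ‖f n v‖ := hn
    _ ≤ ‖f n‖ * ‖v‖ := (f n).le_opNorm v
    _ ≤ ‖f n‖ := mul_le_of_le_one_right (norm_nonneg _) hv.le

theorem WeakStarTendsto.norm_le_liminf_norm (h : WeakStarTendsto f g)
    (hcobdd : IsCoboundedUnder (· ≥ ·) atTop fun n => ‖f n‖) :
    ‖g‖ ≤ liminf (fun n => ‖f n‖) atTop :=
  le_of_forall_lt_imp_le_of_dense fun _ hc =>
    le_liminf_of_le hcobdd ((h.eventually_lt_norm hc).mono fun _ => le_of_lt)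

theorem WeakStarNull.norm_le_liminf_norm_sub (hf : WeakStarNull f)
    (hlim : liminf (fun n => ‖f n‖) atTop ≠ 0) :
    ‖g‖ ≤ liminf (fun n => ‖f n - g‖) atTop := by
  -- Otherwise `‖f n‖ → ∞` and the liminf takes the junk value `0`.
  have hcobdd : IsCoboundedUnder (· ≥ ·) atTop fun n => ‖f n‖ := by
    by_contra h
    exact hlim (Real.liminf_of_not_isCoboundedUnder h)
  obtain ⟨a, ha⟩ := hcobdd.frequently_le
  have hcobdd_sub : IsCoboundedUnder (· ≥ ·) atTop fun n => ‖f n - g‖ :=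
    .of_frequently_le (a := a + ‖g‖) (ha.mono fun n hn => by linarith [norm_sub_le (f n) g])
  simpa using (WeakStarTendsto.sub_const hf g).norm_le_liminf_norm hcobdd_sub

theorem opialModulusStar_le {c : ℝ} (hg : c ≤ ‖g‖) (hf : WeakStarNull f)
    (hlim : 1 ≤ liminf (fun n => ‖f n‖) atTop) :
    opialModulusStar X c ≤ liminf (fun n => ‖f n - g‖) atTop - 1 := by
  refine csInf_le ⟨c - 1, ?_⟩ ⟨f, g, hg, hf, hlim, rfl⟩
  rintro _ ⟨f', g', hg', hf', hlim', rfl⟩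
  linarith [hf'.norm_le_liminf_norm_sub (g := g') (by linarith)]

theorem opialModulusStar_nonneg {c : ℝ} (hc : 1 ≤ c) : 0 ≤ opialModulusStar X c := by
  refine Real.sInf_nonneg ?_
  rintro _ ⟨f, g, hg, hf, hlim, rfl⟩
  linarith [hf.norm_le_liminf_norm_sub (g := g) (by linarith)]

end WeakStar

theorem stmt6_general (X : Type*) [NormedAddCommGroup X] [NormedSpace ℝ X]
    (f : ℕ → X →L[ℝ] ℝ) (hf : ∀ n, ‖f n‖ = 1)
    (g : X →L[ℝ] ℝ) (hfg : WeakStarTendsto f g)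
    (h0 : 0 < Filter.liminf (fun n => ‖f n - g‖) atTop)
    (hlt : Filter.liminf (fun n => ‖f n - g‖) atTop < ‖g‖) :
    Filter.liminf (fun n => ‖f n - g‖) atTop ≤ 1 / (1 + opialModulusStar X 1) := by
  set d := liminf (fun n => ‖f n - g‖) atTop
  have hbdd : IsBoundedUnder (· ≤ ·) atTop fun n => ‖f n - g‖ :=
    isBoundedUnder_of ⟨1 + ‖g‖, fun n => (norm_sub_le _ _).trans_eq (by rw [hf])⟩
  have hF : WeakStarNull fun n => d⁻¹ • (f n - g) := by
    simpa [WeakStarNull] using (hfg.sub_const g).const_smul d⁻¹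
  have hF_norm : liminf (fun n => ‖d⁻¹ • (f n - g)‖) atTop = 1 := by
    simp_rw [norm_smul, Real.norm_of_nonneg (inv_nonneg.2 h0.le)]
    rw [Real.liminf_const_mul (inv_pos.2 h0) (isBoundedUnder_of ⟨0, fun _ => norm_nonneg _⟩) hbdd,
      inv_mul_cancel₀ h0.ne']
  have hG : 1 ≤ ‖-(d⁻¹ • g)‖ := by
    rw [norm_neg, norm_smul, Real.norm_of_nonneg (inv_nonneg.2 h0.le)]
    exact (one_le_inv_mul₀ h0).2 hlt.le
  have hFG (n : ℕ) : ‖d⁻¹ • (f n - g) - -(d⁻¹ • g)‖ = d⁻¹ := by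
    rw [sub_neg_eq_add, ← smul_add, sub_add_cancel, norm_smul, hf, mul_one,
      Real.norm_of_nonneg (inv_nonneg.2 h0.le)]
  have hr := opialModulusStar_le hG hF hF_norm.ge
  simp only [hFG, liminf_const] at hr
  rw [le_div_iff₀ (by linarith [opialModulusStar_nonneg (X := X) le_rfl])]
  calc d * (1 + opialModulusStar X 1) ≤ d * d⁻¹ := by gcongr; linarith
    _ = 1 := mul_inv_cancel₀ h0.ne'

theorem stmt6 (X : Type*) [NormedAddCommGroup X] [NormedSpace ℝ X] [CompleteSpace X]
    (f : ℕ → X →L[ℝ] ℝ) (hf : ∀ n, ‖f n‖ = 1)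
    (g : X →L[ℝ] ℝ) (hfg : WeakStarTendsto f g) (hg : g ≠ 0)
    (h0 : 0 < Filter.liminf (fun n => ‖f n - g‖) atTop)
    (hlt : Filter.liminf (fun n => ‖f n - g‖) atTop < ‖g‖) :
    Filter.liminf (fun n => ‖f n - g‖) atTop ≤ 1 / (1 + opialModulusStar X 1) :=
  stmt6_general X f hf g hfg h0 hlt
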